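/- Let $A, I \in \mathbb{R}^{n\times n}$ with $I$ the identity, $\omega > 0$, and suppose $A - \omega I$ is invertible. Define $\eta(t) = [e^{(A-\omega I)t} + \omega (A-\omega I)^{-1}(e^{(A-\omega I)t} - I)]\mu$ for a constant vector $\mu \in \mathbb{R}^n$. Then $\eta$ satisfies the integral equation $\eta(t) = \mu + \int_0^t A e^{-\omega(t-s)} \eta(s)\, ds$ for all $t \ge 0$, and $\eta(0) = \mu$. -/

import Mathlib

open NormedSpace intervalIntegral

attribute [local instance] Matrix.linftyOpNormedRing Matrix.linftyOpNormedAlgebra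

set_option maxHeartbeats 1000000 in
/-- Mean intensity formula for a multivariate Hawkes process with exponential
kernel: `η t = [exp((A-ωI)t) + ω (A-ωI)⁻¹ (exp((A-ωI)t) - 1)] μ` satisfies the
renewal equation `η t = μ + ∫₀ᵗ A e^{-ω(t-s)} η s ds` and `η 0 = μ`. -/
theorem hawkes_mean_intensity_renewal
    (n : ℕ) (A : Matrix (Fin n) (Fin n) ℝ) (ω : ℝ) (hω : 0 < ω)
    (hinv : IsUnit (A - ω • (1 : Matrix (Fin n) (Fin n) ℝ)))
    (μ : Fin n → ℝ)
    (η : ℝ → Fin n → ℝ)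
    (hη : ∀ t : ℝ, η t =
      (exp (t • (A - ω • (1 : Matrix (Fin n) (Fin n) ℝ))) +
        ω • (A - ω • (1 : Matrix (Fin n) (Fin n) ℝ))⁻¹ *
          (exp (t • (A - ω • (1 : Matrix (Fin n) (Fin n) ℝ))) - 1)).mulVec μ) :
    (∀ t : ℝ, 0 ≤ t →
      η t = μ + ∫ s in (0:ℝ)..t, Real.exp (-ω * (t - s)) • A.mulVec (η s)) ∧
    η 0 = μ := by
  classical
  set B := A - ω • (1 : Matrix (Fin n) (Fin n) ℝ) with hBdef
  have hdet : IsUnit B.det := (Matrix.isUnit_iff_isUnit_det B).mp hinv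
  have hBB : B * B⁻¹ = 1 := Matrix.mul_nonsing_inv B hdet
  have hB'B : B⁻¹ * B = 1 := Matrix.nonsing_inv_mul B hdet
  have hA : A = B + ω • 1 := by rw [hBdef]; abel
  have hAB : A * B⁻¹ = 1 + ω • B⁻¹ := by
    rw [hA, add_mul, hBB, smul_mul_assoc, one_mul]
  have hB'A : B⁻¹ * A = 1 + ω • B⁻¹ := by
    rw [hA, mul_add, hB'B, mul_smul_comm, mul_one]
  -- exponential splitting
  have hexpA : ∀ s : ℝ, exp (s • A) = Real.exp (s * ω) • exp (s • B) := by
    intro s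
    have hsplit : s • A = s • B + algebraMap ℝ (Matrix (Fin n) (Fin n) ℝ) (s * ω) := by
      rw [Algebra.algebraMap_eq_smul_one, hA, smul_add, smul_smul]
    have hcomm : Commute (s • B) (algebraMap ℝ (Matrix (Fin n) (Fin n) ℝ) (s * ω)) :=
      (Algebra.commutes (s * ω) (s • B)).symm
    have hal : exp (algebraMap ℝ (Matrix (Fin n) (Fin n) ℝ) (s * ω)) =
        algebraMap ℝ (Matrix (Fin n) (Fin n) ℝ) (Real.exp (s * ω)) := by
      rw [Real.exp_eq_exp_ℝ]; exact (algebraMap_exp_comm _).symm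
    rw [hsplit, Matrix.exp_add_of_commute _ _ hcomm, hal,
      Algebra.algebraMap_eq_smul_one, mul_smul_comm, mul_one]
  -- the linear map `M ↦ M.mulVec μ`
  let Llin : Matrix (Fin n) (Fin n) ℝ →ₗ[ℝ] (Fin n → ℝ) :=
    { toFun := fun M => M.mulVec μ
      map_add' := fun M N => Matrix.add_mulVec M N μ
      map_smul' := fun c M => Matrix.smul_mulVec c M μ }
  let L : Matrix (Fin n) (Fin n) ℝ →L[ℝ] (Fin n → ℝ) := Llin.toContinuousLinearMap
  have hLapp : ∀ M : Matrix (Fin n) (Fin n) ℝ, L M = M.mulVec μ := fun _ => rfl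
  have hη' : ∀ s : ℝ, η s = L (exp (s • B) + ω • B⁻¹ * (exp (s • B) - 1)) :=
    fun s => hη s
  have hη0 : η 0 = μ := by
    rw [hη' 0, zero_smul, exp_zero, sub_self, mul_zero, add_zero, hLapp, Matrix.one_mulVec]
  refine ⟨fun t _ => ?_, hη0⟩
  -- antiderivative (matrix-valued part)
  set G : ℝ → Matrix (Fin n) (Fin n) ℝ := fun s =>
    Real.exp (-ω * t) • (A * B⁻¹ * exp (s • A) - Real.exp (ω * s) • (A * B⁻¹)) with hGdef
  set G' : ℝ → Matrix (Fin n) (Fin n) ℝ := fun s =>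
    Real.exp (-ω * t) •
      (A * B⁻¹ * (A * exp (s • A)) - (Real.exp (ω * s) * ω) • (A * B⁻¹)) with hG'def
  have hGderiv : ∀ s : ℝ, HasDerivAt G (G' s) s := by
    intro s
    have h1 : HasDerivAt (fun u : ℝ => exp (u • A)) (A * exp (s • A)) s :=
      hasDerivAt_exp_smul_const' A s
    have h2 := h1.const_mul (A * B⁻¹)
    have h3 : HasDerivAt (fun u : ℝ => Real.exp (ω * u)) (Real.exp (ω * s) * ω) s := by
      have := (Real.hasDerivAt_exp (ω * s)).comp s ((hasDerivAt_id s).const_mul ω)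
      simp only [mul_one] at this
      exact this
    have h4 := h3.smul_const (A * B⁻¹)
    exact (h2.sub h4).const_smul (Real.exp (-ω * t))
  -- the derivative of `L ∘ G` is the integrand
  have hkey : ∀ s : ℝ, L (G' s) = Real.exp (-ω * (t - s)) • A.mulVec (η s) := by
    intro s
    rw [hη' s, hLapp, hLapp, Matrix.mulVec_mulVec, ← Matrix.smul_mulVec]
    congr 1
    simp only [hG'def]
    have hsplit : -ω * (t - s) = -ω * t + ω * s := by ring
    rw [hsplit, Real.exp_add, mul_smul (Real.exp (-ω * t)), hexpA s]
    congr 1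
    have hAssoc : A * B⁻¹ * (A * (Real.exp (s * ω) • exp (s • B))) =
        Real.exp (s * ω) • (A * ((B⁻¹ * A) * exp (s • B))) := by
      simp only [mul_smul_comm, mul_assoc]
    rw [hAssoc, hB'A, mul_comm s ω]
    set E := exp (s • B)
    simp only [mul_add, add_mul, mul_sub, sub_mul, mul_one, one_mul, smul_sub, smul_add,
      mul_smul_comm, smul_mul_assoc, smul_smul, mul_assoc]
    congr 1
    rw [add_sub_assoc]
  have hder : ∀ s : ℝ, HasDerivAt (fun u => L (G u))
      (Real.exp (-ω * (t - s)) • A.mulVec (η s)) s := by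
    intro s
    have := L.hasFDerivAt.comp_hasDerivAt s (hGderiv s)
    exact this.congr_deriv (hkey s)
  -- integrability of the integrand (it is continuous)
  have hcont : Continuous fun s : ℝ => Real.exp (-ω * (t - s)) • A.mulVec (η s) := by
    have hE : Continuous fun s : ℝ => exp (s • B) :=
      exp_continuous.comp (continuous_id.smul continuous_const)
    have hηc : Continuous η := by
      have : Continuous fun s : ℝ =>
          L (exp (s • B) + ω • B⁻¹ * (exp (s • B) - 1)) :=
        L.continuous.comp (hE.add (continuous_const.mul (hE.sub continuous_const)))
      exact this.congr fun s => (hη' s).symm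
    have hmv : Continuous fun v : Fin n → ℝ => A.mulVec v :=
      LinearMap.continuous_of_finiteDimensional (Matrix.mulVecLin A)
    exact ((Real.continuous_exp.comp (by fun_prop)).smul (hmv.comp hηc))
  have hFTC : (∫ s in (0:ℝ)..t, Real.exp (-ω * (t - s)) • A.mulVec (η s)) =
      L (G t) - L (G 0) :=
    integral_eq_sub_of_hasDerivAt (fun s _ => hder s) (hcont.intervalIntegrable 0 t)
  have hG0 : G 0 = 0 := by
    rw [hGdef]
    simp [zero_smul, exp_zero]
  have h1 : Real.exp (-ω * t) * Real.exp (t * ω) = 1 := by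
    rw [← Real.exp_add]; ring_nf; exact Real.exp_zero
  have h2 : Real.exp (-ω * t) * Real.exp (ω * t) = 1 := by
    rw [← Real.exp_add]; ring_nf; exact Real.exp_zero
  have hGt : (1 : Matrix (Fin n) (Fin n) ℝ) + G t =
      exp (t • B) + ω • B⁻¹ * (exp (t • B) - 1) := by
    rw [hGdef]
    simp only
    rw [hexpA t, hAB, mul_smul_comm, smul_sub, smul_smul, smul_smul, h1, h2, one_smul,
      one_smul]
    set E := exp (t • B)
    simp only [mul_add, add_mul, mul_sub, sub_mul, mul_one, one_mul, smul_sub, smul_add,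
      mul_smul_comm, smul_mul_assoc, smul_smul]
    module
  rw [hFTC, hG0, map_zero, sub_zero, hη' t, ← hGt, map_add, hLapp, Matrix.one_mulVec]
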